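/- Let u : L → K be a homomorphism of bounded lattices. Then: (a) for every f ∈ SPH(K,2_B), the partial map f∘u (with domain u⁻¹(dom(f)) and value f(u(a)) at a in its domain) is an SPH from L to 2_B; write D̄♭(u)(f) = f∘u. (b) For every η ∈ MPE(D̄♭(L),2), the partial map η∘D̄♭(u) on SPH(K,2_B) (defined at f exactly when D̄♭(u)(f) ∈ dom(η), with value η(D̄♭(u)(f))) belongs to MPE(D̄♭(K),2). (c) The resulting map η ↦ η∘D̄♭(u) from the complete lattice MPE(D̄♭(L),2) to the complete lattice MPE(D̄♭(K),2) preserves arbitrary meets and arbitrary joins, i.e. it is a complete lattice homomorphism between the canonical extensions of L and of K. -/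

import Mathlib

namespace CanExt

open Classical

/-- A partial map from `X` into the two-element chain `{0,1}` (encoded as `Bool`,
with `false` playing the role of `0` and `true` the role of `1`);
`φ x = none` means `x` is outside the domain of `φ`. -/
abbrev PMap (X : Type*) := X → Option Bool

/-- The preimage of `1` of a partial map. -/
def pre1 {X : Type*} (φ : PMap X) : Set X := {x | φ x = some true}

/-- The preimage of `0` of a partial map. -/
def pre0 {X : Type*} (φ : PMap X) : Set X := {x | φ x = some false}

/-- A partial map is `E`-preserving if whenever `x, y` lie in its domain and
`(x,y) ∈ E`, then `φ x ≤ φ y`. -/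
def EPres {X : Type*} (E : X → X → Prop) (φ : PMap X) : Prop :=
  ∀ ⦃x y : X⦄, E x y → ∀ ⦃a b : Bool⦄, φ x = some a → φ y = some b → a ≤ b

/-- `PExt ψ φ` : the partial map `ψ` extends the partial map `φ`. -/
def PExt {X : Type*} (ψ φ : PMap X) : Prop :=
  ∀ ⦃x : X⦄ ⦃a : Bool⦄, φ x = some a → ψ x = some a

/-- The set of maximal partial `E`-preserving maps from `(X,E)` into the
two-element chain `2`. -/
def MPE {X : Type*} (E : X → X → Prop) : Set (PMap X) :=
  {φ | EPres E φ ∧ ∀ ψ : PMap X, EPres E ψ → PExt ψ φ → ψ = φ}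

/-- A partial morphism from a graph with topology `(X,E,t)` to `2_τ`:
the preimages of `1` and `0` are `t`-closed (equivalently, the domain is
closed and the restriction to the domain is continuous into discrete `2`),
and the map is `E`-preserving. -/
def PMorphT {X : Type*} (E : X → X → Prop) (t : TopologicalSpace X) (φ : PMap X) : Prop :=
  EPres E φ ∧ @IsClosed X t (pre1 φ) ∧ @IsClosed X t (pre0 φ)

/-- The set of maximal partial morphisms from `(X,E,t)` to `2_τ`. -/
def MPM {X : Type*} (E : X → X → Prop) (t : TopologicalSpace X) : Set (PMap X) :=
  {φ | PMorphT E t φ ∧ ∀ ψ : PMap X, PMorphT E t ψ → PExt ψ φ → ψ = φ}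

/-- The relation `E` between partial maps on a lattice `L`:
`(f,g) ∈ E` iff `f x ≤ g x` for all `x ∈ dom f ∩ dom g`. -/
def ErelP {L : Type*} (f g : PMap L) : Prop :=
  ∀ ⦃x : L⦄ ⦃a b : Bool⦄, f x = some a → g x = some b → a ≤ b

/-- `f ≤₁ g` iff `f⁻¹(1) ⊆ g⁻¹(1)`. -/
def le1 {L : Type*} (f g : PMap L) : Prop := pre1 f ⊆ pre1 g

/-- `f ≤₂ g` iff `f⁻¹(0) ⊆ g⁻¹(0)`. -/
def le2 {L : Type*} (f g : PMap L) : Prop := pre0 f ⊆ pre0 g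

section Lat

variable (L : Type*) [Lattice L] [BoundedOrder L]

/-- A partial homomorphism from a bounded lattice `L` to the two-element
bounded lattice `2_B`: its domain is a `{0,1}`-sublattice of `L` and the
restriction to the domain is a bounded-lattice homomorphism. -/
def PHom (f : PMap L) : Prop :=
  f ⊥ = some false ∧ f ⊤ = some true ∧
  ∀ ⦃a b : L⦄ ⦃x y : Bool⦄, f a = some x → f b = some y →
    f (a ⊓ b) = some (x ⊓ y) ∧ f (a ⊔ b) = some (x ⊔ y)

/-- The set of maximal partial homomorphisms (MPHs) from `L` to `2_B`. -/
def MPHset : Set (PMap L) := {f | PHom L f ∧ ∀ g : PMap L, PHom L g → PExt g f → g = f}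

/-- The underlying set of the graph `D♭(L)`. -/
abbrev MPHsub := {f : PMap L // f ∈ MPHset L}

/-- The relation `E` on `MPH(L, 2_B)`, giving the graph `D♭(L)`. -/
def EM (f g : MPHsub L) : Prop := ErelP f.1 g.1

/-- The evaluation map `e_a` on `MPH(L,2_B)` : `e_a(f) = f(a)` if `a ∈ dom f`. -/
def evalM (a : L) : PMap (MPHsub L) := fun f => f.1 a

/-- `V_a = {f ∈ MPH(L,2_B) : f(a) = 0}`. -/
def VaM (a : L) : Set (MPHsub L) := {f | f.1 a = some false}

/-- `W_a = {f ∈ MPH(L,2_B) : f(a) = 1}`. -/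
def WaM (a : L) : Set (MPHsub L) := {f | f.1 a = some true}

/-- The topology on `MPH(L,2_B)` with the sets `V_a`, `W_a` as a subbasis of
closed sets. -/
def tauM : TopologicalSpace (MPHsub L) :=
  TopologicalSpace.generateFrom {U | ∃ a : L, U = (VaM L a)ᶜ ∨ U = (WaM L a)ᶜ}

/-- A (nonempty) lattice filter. -/
def IsLatFilter (F : Set L) : Prop :=
  F.Nonempty ∧ (∀ ⦃a b : L⦄, a ∈ F → a ≤ b → b ∈ F) ∧
    (∀ ⦃a b : L⦄, a ∈ F → b ∈ F → a ⊓ b ∈ F)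

/-- A (nonempty) lattice ideal. -/
def IsLatIdeal (I : Set L) : Prop :=
  I.Nonempty ∧ (∀ ⦃a b : L⦄, a ∈ I → b ≤ a → b ∈ I) ∧
    (∀ ⦃a b : L⦄, a ∈ I → b ∈ I → a ⊔ b ∈ I)

/-- The set of special partial homomorphisms (SPHs) from `L` to `2_B`:
`f⁻¹(1)` is a nonempty filter, `f⁻¹(0)` is a nonempty ideal, and they are
disjoint. -/
def SPHset : Set (PMap L) :=
  {f | IsLatFilter L (pre1 f) ∧ IsLatIdeal L (pre0 f) ∧ Disjoint (pre1 f) (pre0 f)}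

/-- The underlying set of the graph `D̄♭(L)`. -/
abbrev SPHsub := {f : PMap L // f ∈ SPHset L}

/-- The relation `E` on `SPH(L, 2_B)`, giving the graph `D̄♭(L)`. -/
def ES (f g : SPHsub L) : Prop := ErelP f.1 g.1

/-- The evaluation map `ē_a` on `SPH(L,2_B)`. -/
def evalS (a : L) : PMap (SPHsub L) := fun f => f.1 a

/-- `V_a = {f ∈ SPH(L,2_B) : f(a) = 0}`. -/
def VaS (a : L) : Set (SPHsub L) := {f | f.1 a = some false}

/-- `W_a = {f ∈ SPH(L,2_B) : f(a) = 1}`. -/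
def WaS (a : L) : Set (SPHsub L) := {f | f.1 a = some true}

/-- The topology on `SPH(L,2_B)` with the sets `V_a`, `W_a` as a subbasis of
closed sets. -/
def tauS : TopologicalSpace (SPHsub L) :=
  TopologicalSpace.generateFrom {U | ∃ a : L, U = (VaS L a)ᶜ ∨ U = (WaS L a)ᶜ}

/-- The carrier of the completion built from `D♭(L)`. -/
abbrev CX := {φ : PMap (MPHsub L) // φ ∈ MPE (EM L)}

/-- The carrier of the completion built from `D̄♭(L)`. -/
abbrev CY := {φ : PMap (SPHsub L) // φ ∈ MPE (ES L)}

end Lat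

/-!
Over a reflexive relation `E`, a maximal `E`-preserving partial map `φ` into `2` is the same
thing as a formal concept `(φ⁻¹(1), φ⁻¹(0))` of the complementary relation `Eᶜ`, so `MPE(X,2)`
is a concept lattice: meets intersect the sets `φ⁻¹(1)`, joins intersect the sets `φ⁻¹(0)`.
Precomposition with `D̄♭(u)` takes preimages of both sets, and preimages commute with
intersections, so it remains to see that it sends concepts to concepts. This follows from
back-and-forth properties of `D̄♭(u)`: if `(ψ, D̄♭(u)(h)) ∈ E` then some `(g, h) ∈ E` has
`ψ⁻¹(1) ⊆ D̄♭(u)(g)⁻¹(1)` (let `g⁻¹(1)` be the filter generated by `u(ψ⁻¹(1))` and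
`g⁻¹(0) = h⁻¹(0)`), and dually; extents of concepts are closed upwards under inclusion of
`⁻¹(1)`, intents under inclusion of `⁻¹(0)`.
-/

section Graph

variable {X : Type*}

noncomputable def pairMap (A B : Set X) : PMap X := fun x =>
  if x ∈ A then some true else if x ∈ B then some false else none

lemma pre1_pairMap (A B : Set X) : pre1 (pairMap A B) = A := by
  ext x
  by_cases hA : x ∈ A <;> simp [pre1, pairMap, hA]

lemma pre0_pairMap {A B : Set X} (h : Disjoint A B) : pre0 (pairMap A B) = B := by
  ext x
  by_cases hA : x ∈ A <;> by_cases hB : x ∈ B <;> simp [pre0, pairMap, hA, hB]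
  exact Set.disjoint_left.1 h hA hB

lemma pmap_ext {φ ψ : PMap X} (h1 : pre1 φ = pre1 ψ) (h0 : pre0 φ = pre0 ψ) : φ = ψ := by
  funext x
  have e1 := Set.ext_iff.1 h1 x
  have e0 := Set.ext_iff.1 h0 x
  revert e1 e0
  simp only [pre1, pre0, Set.mem_ofPred_eq]
  rcases φ x with _ | _ | _ <;> rcases ψ x with _ | _ | _ <;> simp

variable {E : X → X → Prop}

lemma forall_some_le_iff {p q : Option Bool} :
    (∀ ⦃a b : Bool⦄, p = some a → q = some b → a ≤ b) ↔ ¬(p = some true ∧ q = some false) := by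
  rcases p with _ | _ | _ <;> rcases q with _ | _ | _ <;> simp

lemma ePres_iff {φ : PMap X} : EPres E φ ↔ pre1 φ ⊆ lowerPolar Eᶜ (pre0 φ) := by
  simp only [EPres, forall_some_le_iff, Set.subset_def, mem_lowerPolar_iff, pre1, pre0,
    Set.mem_ofPred_eq, Pi.compl_apply, compl_iff_not]
  grind

lemma pExt_iff {φ ψ : PMap X} : PExt ψ φ ↔ pre1 φ ⊆ pre1 ψ ∧ pre0 φ ⊆ pre0 ψ := by
  refine ⟨fun h => ⟨fun _ hx => h hx, fun _ hx => h hx⟩, fun ⟨h1, h0⟩ x a hx => ?_⟩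
  cases a
  exacts [h0 hx, h1 hx]

lemma disjoint_of_subset_lowerPolar (hE : ∀ x, E x x) {A B : Set X}
    (h : A ⊆ lowerPolar Eᶜ B) : Disjoint A B :=
  Set.disjoint_left.2 fun x hA hB => h hA hB (hE x)

theorem mem_MPE_iff (hE : ∀ x, E x x) {φ : PMap X} :
    φ ∈ MPE E ↔ upperPolar Eᶜ (pre1 φ) = pre0 φ ∧ lowerPolar Eᶜ (pre0 φ) = pre1 φ := by
  constructor
  · rintro ⟨hpres, hmax⟩
    have hsep := ePres_iff.1 hpres
    have extend : ∀ A B : Set X, A ⊆ lowerPolar Eᶜ B → pre1 φ ⊆ A → pre0 φ ⊆ B →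
        A = pre1 φ ∧ B = pre0 φ := by
      intro A B hAB h1 h0
      have hdisj := disjoint_of_subset_lowerPolar hE hAB
      have hψ := hmax (pairMap A B)
        (ePres_iff.2 (by rwa [pre1_pairMap, pre0_pairMap hdisj]))
        (pExt_iff.2 (by rw [pre1_pairMap, pre0_pairMap hdisj]; exact ⟨h1, h0⟩))
      rw [← hψ, pre1_pairMap, pre0_pairMap hdisj]
      exact ⟨rfl, rfl⟩
    exact ⟨(extend _ _ (subset_lowerPolar_upperPolar _ _) subset_rfl
        (subset_upperPolar_iff_subset_lowerPolar.2 hsep)).2,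
      (extend _ _ subset_rfl hsep subset_rfl).1⟩
  · rintro ⟨h0, h1⟩
    refine ⟨ePres_iff.2 h1.ge, fun ψ hψ hext => ?_⟩
    obtain ⟨hsub1, hsub0⟩ := pExt_iff.1 hext
    have hsep := ePres_iff.1 hψ
    refine pmap_ext (hsub1.antisymm' ?_) (hsub0.antisymm' ?_)
    · exact h1 ▸ hsep.trans (lowerPolar_anti _ hsub0)
    · exact h0 ▸ (subset_upperPolar_iff_subset_lowerPolar.2 hsep).trans
        (upperPolar_anti _ hsub1)

noncomputable def mpeEquivConcept (hE : ∀ x, E x x) : {φ // φ ∈ MPE E} ≃ Concept X X Eᶜ where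
  toFun φ := ⟨pre1 φ.1, pre0 φ.1, ((mem_MPE_iff hE).1 φ.2).1, ((mem_MPE_iff hE).1 φ.2).2⟩
  invFun c := ⟨pairMap c.extent c.intent, (mem_MPE_iff hE).2 <| by
    rw [pre1_pairMap, pre0_pairMap (disjoint_of_subset_lowerPolar hE c.lowerPolar_intent.ge)]
    exact ⟨c.upperPolar_extent, c.lowerPolar_intent⟩⟩
  left_inv φ := Subtype.ext <| pmap_ext (pre1_pairMap _ _) <| pre0_pairMap <|
    disjoint_of_subset_lowerPolar hE ((mem_MPE_iff hE).1 φ.2).2.ge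
  right_inv c := Concept.ext (pre1_pairMap _ _)

noncomputable abbrev mpeCompleteLattice (hE : ∀ x, E x x) : CompleteLattice {φ // φ ∈ MPE E} :=
  (mpeEquivConcept hE).completeLattice

end Graph

section ConceptComap

variable {α β α' β' : Type*} {r : α → β → Prop} {r' : α' → β' → Prop}

def _root_.Concept.comap (f : α' → α) (g : β' → β)
    (hext : ∀ c : Concept α β r, upperPolar r' (f ⁻¹' c.extent) = g ⁻¹' c.intent)
    (hint : ∀ c : Concept α β r, lowerPolar r' (g ⁻¹' c.intent) = f ⁻¹' c.extent) :
    CompleteLatticeHom (Concept α β r) (Concept α' β' r') where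
  toFun c := ⟨f ⁻¹' c.extent, g ⁻¹' c.intent, hext c, hint c⟩
  map_sInf' S := Concept.ext <| by simp [Set.preimage_iInter₂]
  map_sSup' S := Concept.ext' <| by simp [Set.preimage_iInter₂]

end ConceptComap

section Comap

variable {X Y : Type*} {EX : X → X → Prop} {EY : Y → Y → Prop}

lemma upperPolar_compl_preimage {D : Y → X} (hD : ∀ ⦃y y'⦄, EY y y' → EX (D y) (D y'))
    {U : Set X} (hback : ∀ x ∈ U, ∀ y, EX x (D y) → ∃ y', EY y' y ∧ D y' ∈ U) :
    upperPolar EYᶜ (D ⁻¹' U) = D ⁻¹' upperPolar EXᶜ U := by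
  ext y
  refine ⟨fun hy x hx hxy => ?_, fun hy y' hy' hE => hy hy' (hD hE)⟩
  obtain ⟨y', hE, hy'⟩ := hback x hx y hxy
  exact hy hy' hE

lemma lowerPolar_compl_preimage {D : Y → X} (hD : ∀ ⦃y y'⦄, EY y y' → EX (D y) (D y'))
    {V : Set X} (hforth : ∀ x ∈ V, ∀ y, EX (D y) x → ∃ y', EY y y' ∧ D y' ∈ V) :
    lowerPolar EYᶜ (D ⁻¹' V) = D ⁻¹' lowerPolar EXᶜ V := by
  ext y
  refine ⟨fun hy x hx hxy => ?_, fun hy y' hy' hE => hy hy' (hD hE)⟩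
  obtain ⟨y', hE, hy'⟩ := hforth x hx y hxy
  exact hy hy' hE

lemma comp_mem_MPE (hEX : ∀ x, EX x x) (hEY : ∀ y, EY y y) (D : Y → X)
    (hext : ∀ c : Concept X X EXᶜ, upperPolar EYᶜ (D ⁻¹' c.extent) = D ⁻¹' c.intent)
    (hint : ∀ c : Concept X X EXᶜ, lowerPolar EYᶜ (D ⁻¹' c.intent) = D ⁻¹' c.extent)
    {φ : PMap X} (hφ : φ ∈ MPE EX) : φ ∘ D ∈ MPE EY :=
  (mem_MPE_iff hEY).2
    ⟨hext (mpeEquivConcept hEX ⟨φ, hφ⟩), hint (mpeEquivConcept hEX ⟨φ, hφ⟩)⟩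

variable (hEX : ∀ x, EX x x) (hEY : ∀ y, EY y y) (D : Y → X)
  (hext : ∀ c : Concept X X EXᶜ, upperPolar EYᶜ (D ⁻¹' c.extent) = D ⁻¹' c.intent)
  (hint : ∀ c : Concept X X EXᶜ, lowerPolar EYᶜ (D ⁻¹' c.intent) = D ⁻¹' c.extent)

noncomputable def mpeComap (φ : {φ // φ ∈ MPE EX}) : {ψ // ψ ∈ MPE EY} :=
  ⟨φ.1 ∘ D, comp_mem_MPE hEX hEY D hext hint φ.2⟩

lemma mpeEquivConcept_mpeComap (φ : {φ // φ ∈ MPE EX}) :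
    mpeEquivConcept hEY (mpeComap hEX hEY D hext hint φ) =
      Concept.comap D D hext hint (mpeEquivConcept hEX φ) := rfl

lemma mpeComap_sInf (S : Set {φ // φ ∈ MPE EX}) :
    mpeComap hEX hEY D hext hint ((mpeCompleteLattice hEX).sInf S) =
      (mpeCompleteLattice hEY).sInf (mpeComap hEX hEY D hext hint '' S) := by
  let _ := mpeCompleteLattice hEX
  let _ := mpeCompleteLattice hEY
  apply (mpeEquivConcept hEY).injective
  simp only [mpeEquivConcept_mpeComap, Equiv.infSet_def, Equiv.apply_symm_apply, map_iInf₂,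
    iInf_image]

lemma mpeComap_sSup (S : Set {φ // φ ∈ MPE EX}) :
    mpeComap hEX hEY D hext hint ((mpeCompleteLattice hEX).sSup S) =
      (mpeCompleteLattice hEY).sSup (mpeComap hEX hEY D hext hint '' S) := by
  let _ := mpeCompleteLattice hEX
  let _ := mpeCompleteLattice hEY
  apply (mpeEquivConcept hEY).injective
  simp only [mpeEquivConcept_mpeComap, Equiv.supSet_def, Equiv.apply_symm_apply, map_iSup₂,
    iSup_image]

end Comap

section Lattice

variable {L K : Type*} [Lattice L] [Lattice K]

lemma IsLatIdeal.isLowerSet {I : Set L} (hI : IsLatIdeal L I) : IsLowerSet I :=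
  fun _ _ hba ha => hI.2.1 ha hba

lemma IsLatFilter.isUpperSet {F : Set L} (hF : IsLatFilter L F) : IsUpperSet F :=
  fun _ _ hab ha => hF.2.1 ha hab

lemma pairMap_mem_SPHset {F I : Set K} (hF : IsLatFilter K F) (hI : IsLatIdeal K I)
    (h : Disjoint F I) : pairMap F I ∈ SPHset K := by
  show IsLatFilter K _ ∧ IsLatIdeal K _ ∧ Disjoint _ _
  rw [pre1_pairMap, pre0_pairMap h]
  exact ⟨hF, hI, h⟩

variable [BoundedOrder L] [BoundedOrder K]

lemma IsLatFilter.top_mem {F : Set L} (hF : IsLatFilter L F) : ⊤ ∈ F :=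
  hF.1.elim fun _ ha => hF.2.1 ha le_top

lemma IsLatIdeal.bot_mem {I : Set L} (hI : IsLatIdeal L I) : ⊥ ∈ I :=
  hI.1.elim fun _ ha => hI.2.1 ha bot_le

variable (u : BoundedLatticeHom L K)

lemma IsLatFilter.preimage {F : Set K} (hF : IsLatFilter K F) : IsLatFilter L (u ⁻¹' F) := by
  refine ⟨⟨⊤, ?_⟩, fun _ _ ha hab => hF.2.1 ha (OrderHomClass.mono u hab), fun a b ha hb => ?_⟩
  · simpa only [Set.mem_preimage, map_top] using hF.top_mem
  · simpa only [Set.mem_preimage, map_inf] using hF.2.2 ha hb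

lemma IsLatIdeal.preimage {I : Set K} (hI : IsLatIdeal K I) : IsLatIdeal L (u ⁻¹' I) := by
  refine ⟨⟨⊥, ?_⟩, fun _ _ ha hba => hI.2.1 ha (OrderHomClass.mono u hba), fun a b ha hb => ?_⟩
  · simpa only [Set.mem_preimage, map_bot] using hI.bot_mem
  · simpa only [Set.mem_preimage, map_sup] using hI.2.2 ha hb

lemma IsLatFilter.upperClosure_image {F : Set L} (hF : IsLatFilter L F) :
    IsLatFilter K (upperClosure (u '' F)) := by
  refine ⟨(hF.1.image u).mono subset_upperClosure, fun _ _ ha hab => (upperClosure _).upper hab ha,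
    ?_⟩
  simp only [SetLike.mem_coe, mem_upperClosure, Set.exists_mem_image]
  rintro _ _ ⟨a, ha, hak⟩ ⟨b, hb, hbk⟩
  exact ⟨a ⊓ b, hF.2.2 ha hb, (map_inf u a b).trans_le (inf_le_inf hak hbk)⟩

lemma IsLatIdeal.lowerClosure_image {I : Set L} (hI : IsLatIdeal L I) :
    IsLatIdeal K (lowerClosure (u '' I)) := by
  refine ⟨(hI.1.image u).mono subset_lowerClosure, fun _ _ ha hba => (lowerClosure _).lower hba ha,
    ?_⟩
  simp only [SetLike.mem_coe, mem_lowerClosure, Set.exists_mem_image]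
  rintro _ _ ⟨a, ha, hka⟩ ⟨b, hb, hkb⟩
  exact ⟨a ⊔ b, hI.2.2 ha hb, (sup_le_sup hka hkb).trans_eq (map_sup u a b).symm⟩

lemma comp_mem_SPHset (f : SPHsub K) : (fun a : L => f.1 (u a)) ∈ SPHset L :=
  ⟨f.2.1.preimage u, f.2.2.1.preimage u, f.2.2.2.preimage u⟩

noncomputable def sphComap (f : SPHsub K) : SPHsub L := ⟨fun a => f.1 (u a), comp_mem_SPHset u f⟩

end Lattice

section SPH

variable {L K : Type*} [Lattice L] [Lattice K]

lemma es_iff_disjoint {f g : SPHsub L} : ES L f g ↔ Disjoint (pre1 f.1) (pre0 g.1) := by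
  simp only [ES, ErelP, forall_some_le_iff, Set.disjoint_left, pre1, pre0, Set.mem_ofPred_eq,
    not_and]

lemma es_refl (f : SPHsub L) : ES L f f :=
  es_iff_disjoint.2 f.2.2.2

lemma mem_extent_of_pre1_subset (c : Concept (SPHsub L) (SPHsub L) (ES L)ᶜ) {f f' : SPHsub L}
    (hf : f ∈ c.extent) (h : pre1 f.1 ⊆ pre1 f'.1) : f' ∈ c.extent := by
  rw [← c.lowerPolar_intent] at hf ⊢
  exact fun g hg hE => hf hg (es_iff_disjoint.2 ((es_iff_disjoint.1 hE).mono_left h))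

lemma mem_intent_of_pre0_subset (c : Concept (SPHsub L) (SPHsub L) (ES L)ᶜ) {g g' : SPHsub L}
    (hg : g ∈ c.intent) (h : pre0 g.1 ⊆ pre0 g'.1) : g' ∈ c.intent := by
  rw [← c.upperPolar_extent] at hg ⊢
  exact fun f hf hE => hg hf (es_iff_disjoint.2 ((es_iff_disjoint.1 hE).mono_right h))

variable [BoundedOrder L] [BoundedOrder K] (u : BoundedLatticeHom L K)

lemma es_sphComap ⦃g h : SPHsub K⦄ (hgh : ES K g h) : ES L (sphComap u g) (sphComap u h) :=
  es_iff_disjoint.2 ((es_iff_disjoint.1 hgh).preimage u)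

lemma exists_es_pre1_subset_sphComap {ψ : SPHsub L} {h : SPHsub K}
    (hψh : ES L ψ (sphComap u h)) :
    ∃ g : SPHsub K, ES K g h ∧ pre1 ψ.1 ⊆ pre1 (sphComap u g).1 := by
  set F : Set K := ↑(upperClosure (u '' pre1 ψ.1))
  have hF : Disjoint F (pre0 h.1) := by
    rw [h.2.2.1.isLowerSet.disjoint_upperClosure_left, Set.disjoint_image_left]
    exact es_iff_disjoint.1 hψh
  refine ⟨⟨pairMap F (pre0 h.1), pairMap_mem_SPHset (ψ.2.1.upperClosure_image u) h.2.2.1 hF⟩,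
    es_iff_disjoint.2 ?_, fun a ha => ?_⟩
  · rwa [pre1_pairMap]
  · show u a ∈ pre1 (pairMap F _)
    rw [pre1_pairMap]
    exact subset_upperClosure (Set.mem_image_of_mem u ha)

lemma exists_es_pre0_subset_sphComap {φ : SPHsub L} {g : SPHsub K}
    (hgφ : ES L (sphComap u g) φ) :
    ∃ h : SPHsub K, ES K g h ∧ pre0 φ.1 ⊆ pre0 (sphComap u h).1 := by
  set I : Set K := ↑(lowerClosure (u '' pre0 φ.1))
  have hI : Disjoint (pre1 g.1) I := by
    rw [disjoint_comm, g.2.1.isUpperSet.disjoint_lowerClosure_left, Set.disjoint_image_left,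
      disjoint_comm]
    exact es_iff_disjoint.1 hgφ
  refine ⟨⟨pairMap (pre1 g.1) I, pairMap_mem_SPHset g.2.1 (φ.2.2.1.lowerClosure_image u) hI⟩,
    es_iff_disjoint.2 ?_, fun a ha => ?_⟩
  · rwa [pre0_pairMap hI]
  · show u a ∈ pre0 (pairMap _ I)
    rw [pre0_pairMap hI]
    exact subset_lowerClosure (Set.mem_image_of_mem u ha)

lemma upperPolar_preimage_extent (c : Concept (SPHsub L) (SPHsub L) (ES L)ᶜ) :
    upperPolar (ES K)ᶜ (sphComap u ⁻¹' c.extent) = sphComap u ⁻¹' c.intent := by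
  rw [upperPolar_compl_preimage (es_sphComap u), c.upperPolar_extent]
  intro f hf h hfh
  obtain ⟨g, hgh, hsub⟩ := exists_es_pre1_subset_sphComap u hfh
  exact ⟨g, hgh, mem_extent_of_pre1_subset c hf hsub⟩

lemma lowerPolar_preimage_intent (c : Concept (SPHsub L) (SPHsub L) (ES L)ᶜ) :
    lowerPolar (ES K)ᶜ (sphComap u ⁻¹' c.intent) = sphComap u ⁻¹' c.extent := by
  rw [lowerPolar_compl_preimage (es_sphComap u), c.lowerPolar_intent]
  intro f hf g hgf
  obtain ⟨h, hgh, hsub⟩ := exists_es_pre0_subset_sphComap u hgf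
  exact ⟨h, hgh, mem_intent_of_pre0_subset c hf hsub⟩

end SPH

/-- Let `u : L → K` be a homomorphism of bounded lattices.
(a) For every `f ∈ SPH(K,2_B)` the partial map `f ∘ u` is an SPH from `L`;
write `D̄♭(u)(f) = f ∘ u`. (b) For every `η ∈ MPE(D̄♭(L),2)` the partial map
`η ∘ D̄♭(u)` belongs to `MPE(D̄♭(K),2)`. (c) The resulting map
`η ↦ η ∘ D̄♭(u)` is a complete lattice homomorphism (preserving arbitrary
meets and joins) from the canonical extension of `L` to that of `K`. -/
theorem stmt_19 (L K : Type*) [Lattice L] [BoundedOrder L]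
    [Lattice K] [BoundedOrder K] (u : BoundedLatticeHom L K) :
    (∀ f : SPHsub K, (fun a : L => f.1 (u a)) ∈ SPHset L) ∧
    ∃ Du : SPHsub K → SPHsub L,
      (∀ f : SPHsub K, (Du f).1 = fun a : L => f.1 (u a)) ∧
      (∀ η ∈ MPE (ES L), (fun f : SPHsub K => η (Du f)) ∈ MPE (ES K)) ∧
      ∃ instL : CompleteLattice (CY L), ∃ instK : CompleteLattice (CY K),
        (∀ φ ψ : CY L, instL.le φ ψ ↔ pre1 φ.1 ⊆ pre1 ψ.1) ∧
        (∀ φ ψ : CY K, instK.le φ ψ ↔ pre1 φ.1 ⊆ pre1 ψ.1) ∧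
        ∃ G : CY L → CY K,
          (∀ η : CY L, (G η).1 = fun f : SPHsub K => η.1 (Du f)) ∧
          (∀ S : Set (CY L), G (instL.sInf S) = instK.sInf (G '' S)) ∧
          (∀ S : Set (CY L), G (instL.sSup S) = instK.sSup (G '' S)) := by
  have hext := upperPolar_preimage_extent u
  have hint := lowerPolar_preimage_intent u
  exact ⟨comp_mem_SPHset u, sphComap u, fun _ => rfl,
    fun _ => comp_mem_MPE es_refl es_refl _ hext hint,
    mpeCompleteLattice es_refl, mpeCompleteLattice es_refl, fun _ _ => Iff.rfl, fun _ _ => Iff.rfl,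
    mpeComap es_refl es_refl _ hext hint, fun _ => rfl,
    mpeComap_sInf es_refl es_refl _ hext hint, mpeComap_sSup es_refl es_refl _ hext hint⟩

end CanExt
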